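/- arXiv:1710.02696 — 2 statements merged into one kernel-verified Lean document; each statement's English description precedes it below -/
import Mathlib

section
/- Let $F,G:[0,T]\to\mathbb{R}$ be continuously differentiable with $F(0)=0$ and $F(t)>0$ for all $t\in(0,T]$. Then for each fixed $t\in(0,T]$, as $\varepsilon\to 0^+$, the integral $N_\varepsilon(t)=\int_0^t \exp\left(-\frac{1}{\varepsilon}\int_s^t F(v)\,dv\right) G(s)\,ds$ satisfies $N_\varepsilon(t) = \varepsilon \frac{G(t)}{F(t)}(1+O(\varepsilon))$, i.e., there exist constants $C>0$ and $\varepsilon_0>0$ such that $|N_\varepsilon(t) - \varepsilon G(t)/F(t)| \le C\varepsilon^2$ for all $0<\varepsilon\le\varepsilon_0$. -/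
/-!
Write `u_ε(s) = exp (-(1/ε) ∫_s^t F)` and split `[0, t]` at `t/2`. On `[0, t/2]` the weight is at
most `u_ε(t/2) = exp (-c/ε)` with `c = ∫_{t/2}^t F > 0`, hence `O(ε²)`. On `[t/2, t]` we have
`F ≥ m > 0`, and `u_ε' = (F/ε) u_ε`, so `F u_ε = ε u_ε'`. Writing `G = F · (G/F)` and integrating by
parts gives `ε G(t)/F(t)` up to the boundary term `ε u_ε(t/2) (G/F)(t/2) = O(ε³)` and
`ε ∫ u_ε (G/F)'`, which is `O(ε²)` because the same identity bounds the mass `∫ u_ε` by `ε/m`.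
-/

open Real Set MeasureTheory

noncomputable def laplaceWeight (F : ℝ → ℝ) (b ε s : ℝ) : ℝ :=
  exp (-(1 / ε) * ∫ v in s..b, F v)

section LaplaceWeight

variable {F : ℝ → ℝ} {a b ε : ℝ}

theorem laplaceWeight_pos (s : ℝ) : 0 < laplaceWeight F b ε s := exp_pos _

@[simp]
theorem laplaceWeight_self : laplaceWeight F b ε b = 1 := by
  simp [laplaceWeight]

theorem continuousOn_laplaceWeight (hab : a ≤ b) (hF : ContinuousOn F (Icc a b)) :
    ContinuousOn (laplaceWeight F b ε) (Icc a b) := by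
  have hΦ := intervalIntegral.continuousOn_primitive_interval_left (μ := volume) (b := b)
    (by rw [uIcc_of_le hab]; exact hF.integrableOn_Icc)
  rw [uIcc_of_le hab] at hΦ
  exact (continuousOn_const.mul hΦ).rexp

theorem hasDerivAt_laplaceWeight (hF : ContinuousOn F (Icc a b)) {s : ℝ} (hs : s ∈ Ioo a b) :
    HasDerivAt (laplaceWeight F b ε) (F s / ε * laplaceWeight F b ε s) s := by
  have hFs : ContinuousAt F s := hF.continuousAt (Icc_mem_nhds hs.1 hs.2)
  have hΦ : HasDerivAt (fun x => ∫ v in x..b, F v) (-F s) s :=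
    intervalIntegral.integral_hasDerivAt_left
      ((hF.mono (Icc_subset_Icc_left hs.1.le)).intervalIntegrable_of_Icc hs.2.le)
      ((hF.mono Ioo_subset_Icc_self).stronglyMeasurableAtFilter isOpen_Ioo s hs) hFs
  exact (hΦ.const_mul (-(1 / ε))).exp.congr_deriv (by rw [laplaceWeight]; ring)

theorem laplaceWeight_le_laplaceWeight (hε : 0 ≤ ε) {s r : ℝ} (hsr : s ≤ r)
    (hFsr : IntervalIntegrable F volume s r) (hFrb : IntervalIntegrable F volume r b)
    (hF : ∀ v ∈ Ioc s r, 0 ≤ F v) :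
    laplaceWeight F b ε s ≤ laplaceWeight F b ε r := by
  have hnonneg : 0 ≤ ∫ v in s..r, F v := by
    rw [intervalIntegral.integral_of_le hsr]; exact setIntegral_nonneg measurableSet_Ioc hF
  unfold laplaceWeight
  gcongr exp ?_
  rw [← intervalIntegral.integral_add_adjacent_intervals hFsr hFrb]
  have : 0 ≤ 1 / ε := by positivity
  nlinarith

theorem laplaceWeight_le_sq (hε : 0 < ε) (hc : 0 < ∫ v in a..b, F v) :
    laplaceWeight F b ε a ≤ 2 / (∫ v in a..b, F v) ^ 2 * ε ^ 2 := by
  set c := ∫ v in a..b, F v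
  have hx : 0 ≤ c / ε := by positivity
  have hexp : (c / ε) ^ 2 / 2 ≤ exp (c / ε) := by
    nlinarith [quadratic_le_exp_of_nonneg hx]
  have : laplaceWeight F b ε a = (exp (c / ε))⁻¹ := by
    rw [laplaceWeight, ← exp_neg]; ring_nf; rfl
  rw [this, inv_le_comm₀ (exp_pos _) (by positivity)]
  calc (2 / c ^ 2 * ε ^ 2)⁻¹ = (c / ε) ^ 2 / 2 := by field_simp
    _ ≤ exp (c / ε) := hexp

theorem integral_laplaceWeight_mul_mul_eq (hab : a ≤ b) (hε : ε ≠ 0) (hF : ContinuousOn F (Icc a b))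
    {H H' : ℝ → ℝ} (hH : ContinuousOn H (Icc a b)) (hHd : ∀ s ∈ Ioo a b, HasDerivAt H (H' s) s)
    (hH' : IntervalIntegrable H' volume a b) :
    ∫ s in a..b, laplaceWeight F b ε s * (F s * H s) =
      ε * (H b - laplaceWeight F b ε a * H a) - ε * ∫ s in a..b, laplaceWeight F b ε s * H' s := by
  have hu := continuousOn_laplaceWeight (ε := ε) hab hF
  have hparts := intervalIntegral.integral_mul_deriv_eq_deriv_mul_of_hasDerivAt (u := H)
    (v := laplaceWeight F b ε) (u' := H') (v' := fun s => F s / ε * laplaceWeight F b ε s)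
    (by rwa [uIcc_of_le hab]) (by rwa [uIcc_of_le hab])
    (by rwa [min_eq_left hab, max_eq_right hab])
    (by rw [min_eq_left hab, max_eq_right hab]; exact fun s hs => hasDerivAt_laplaceWeight hF hs)
    hH' (((hF.div_const ε).mul hu).intervalIntegrable_of_Icc hab)
  rw [laplaceWeight_self, mul_one] at hparts
  calc ∫ s in a..b, laplaceWeight F b ε s * (F s * H s)
      = ε * ∫ s in a..b, H s * (F s / ε * laplaceWeight F b ε s) := by
        rw [← intervalIntegral.integral_const_mul]; congr 1; ext s; field_simp
    _ = _ := by
        rw [hparts, mul_sub]; congr 2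
        · ring
        · congr 1; ext s; ring

theorem integral_laplaceWeight_le (hab : a ≤ b) (hε : 0 < ε) (hF : ContinuousOn F (Icc a b)) {m : ℝ}
    (hm : 0 < m) (hmF : ∀ s ∈ Icc a b, m ≤ F s) :
    ∫ s in a..b, laplaceWeight F b ε s ≤ ε / m := by
  have hu := continuousOn_laplaceWeight (ε := ε) hab hF
  have hmass := integral_laplaceWeight_mul_mul_eq hab hε.ne' hF continuousOn_const
    (fun s _ => hasDerivAt_const s (1 : ℝ)) (intervalIntegrable_const (c := 0))
  simp only [mul_one, mul_zero, intervalIntegral.integral_zero, sub_zero] at hmass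
  have hmono : ∫ s in a..b, m * laplaceWeight F b ε s ≤ ∫ s in a..b, laplaceWeight F b ε s * F s :=
    intervalIntegral.integral_mono_on hab (hu.const_mul m |>.intervalIntegrable_of_Icc hab)
      (hu.mul hF |>.intervalIntegrable_of_Icc hab)
      fun s hs => by rw [mul_comm]; exact mul_le_mul_of_nonneg_left (hmF s hs) (laplaceWeight_pos s).le
  rw [intervalIntegral.integral_const_mul, hmass] at hmono
  rw [le_div_iff₀ hm]
  nlinarith [laplaceWeight_pos (F := F) (b := b) (ε := ε) a]

theorem abs_integral_laplaceWeight_mul_le (hab : a ≤ b) (hε : 0 < ε) (hF : ContinuousOn F (Icc a b))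
    {m : ℝ} (hm : 0 < m) (hmF : ∀ s ∈ Icc a b, m ≤ F s) {g : ℝ → ℝ}
    {L : ℝ} (hgL : ∀ s ∈ Icc a b, |g s| ≤ L) :
    |∫ s in a..b, laplaceWeight F b ε s * g s| ≤ L * (ε / m) := by
  have hu := continuousOn_laplaceWeight (ε := ε) hab hF
  calc |∫ s in a..b, laplaceWeight F b ε s * g s|
      = ‖∫ s in a..b, laplaceWeight F b ε s * g s‖ := (Real.norm_eq_abs _).symm
    _ ≤ ∫ s in a..b, L * laplaceWeight F b ε s := by
        refine intervalIntegral.norm_integral_le_of_norm_le hab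
          (Filter.Eventually.of_forall fun s hs => ?_)
          ((hu.const_mul L).intervalIntegrable_of_Icc hab)
        rw [norm_mul, Real.norm_of_nonneg (laplaceWeight_pos s).le, mul_comm]
        exact mul_le_mul_of_nonneg_right (hgL s (Ioc_subset_Icc_self hs)) (laplaceWeight_pos s).le
    _ = L * ∫ s in a..b, laplaceWeight F b ε s := intervalIntegral.integral_const_mul _ _
    _ ≤ L * (ε / m) := by
        have hL : 0 ≤ L := (abs_nonneg _).trans (hgL a ⟨le_rfl, hab⟩)
        gcongr
        exact integral_laplaceWeight_le hab hε hF hm hmF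

theorem exists_abs_integral_laplaceWeight_mul_le_sq {r : ℝ} {G : ℝ → ℝ} (har : a ≤ r) (hrb : r < b)
    (hF : ContinuousOn F (Icc a b)) (hFpos : ∀ s ∈ Ioc a b, 0 < F s) (hG : ContinuousOn G (Icc a r)) :
    ∃ K ≥ 0, ∀ ε > 0, |∫ s in a..r, laplaceWeight F b ε s * G s| ≤ K * ε ^ 2 := by
  obtain ⟨M, hM⟩ := isCompact_Icc.exists_bound_of_continuousOn hG
  have hM0 : 0 ≤ M := (norm_nonneg _).trans (hM a ⟨le_rfl, har⟩)
  have hFi : ∀ x ∈ Icc a b, ∀ y ∈ Icc a b, IntervalIntegrable F volume x y := fun x hx y hy =>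
    (hF.mono (uIcc_subset_Icc hx hy)).intervalIntegrable (μ := volume)
  set c := ∫ v in r..b, F v
  have hc : 0 < c := intervalIntegral.intervalIntegral_pos_of_pos_on
    (hFi r ⟨har, hrb.le⟩ b ⟨har.trans hrb.le, le_rfl⟩)
    (fun s hs => hFpos s ⟨har.trans_lt hs.1, hs.2.le⟩) hrb
  refine ⟨M * (2 / c ^ 2) * (r - a), by have := sub_nonneg.2 har; positivity, fun ε hε => ?_⟩
  have hu : ∀ s ∈ Icc a r, laplaceWeight F b ε s ≤ 2 / c ^ 2 * ε ^ 2 := fun s hs =>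
    (laplaceWeight_le_laplaceWeight hε.le hs.2 (hFi s ⟨hs.1, hs.2.trans hrb.le⟩ r ⟨har, hrb.le⟩)
      (hFi r ⟨har, hrb.le⟩ b ⟨har.trans hrb.le, le_rfl⟩)
      fun v hv => (hFpos v ⟨hs.1.trans_lt hv.1, hv.2.trans hrb.le⟩).le).trans
    (laplaceWeight_le_sq hε hc)
  have hbound := intervalIntegral.norm_integral_le_of_norm_le_const
    (f := fun s => laplaceWeight F b ε s * G s) (C := M * (2 / c ^ 2 * ε ^ 2)) fun s hs => by
      rw [uIoc_of_le har] at hs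
      rw [norm_mul, Real.norm_of_nonneg (laplaceWeight_pos s).le, mul_comm]
      exact mul_le_mul (hM s (Ioc_subset_Icc_self hs)) (hu s (Ioc_subset_Icc_self hs))
        (laplaceWeight_pos s).le hM0
  rw [abs_of_nonneg (sub_nonneg.2 har)] at hbound
  calc |∫ s in a..r, laplaceWeight F b ε s * G s| ≤ M * (2 / c ^ 2 * ε ^ 2) * (r - a) := hbound
    _ = M * (2 / c ^ 2) * (r - a) * ε ^ 2 := by ring

theorem abs_integral_laplaceWeight_mul_mul_sub_le (hab : a ≤ b) (hε : 0 < ε)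
    (hF : ContinuousOn F (Icc a b)) {m : ℝ} (hm : 0 < m) (hmF : ∀ s ∈ Icc a b, m ≤ F s)
    {H H' : ℝ → ℝ} (hH : ContinuousOn H (Icc a b)) (hHd : ∀ s ∈ Ioo a b, HasDerivAt H (H' s) s)
    (hH' : IntervalIntegrable H' volume a b) {L : ℝ} (hH'L : ∀ s ∈ Icc a b, |H' s| ≤ L) :
    |(∫ s in a..b, laplaceWeight F b ε s * (F s * H s)) - ε * H b| ≤
      ε * (laplaceWeight F b ε a * |H a|) + ε * (L * (ε / m)) := by
  rw [integral_laplaceWeight_mul_mul_eq hab hε.ne' hF hH hHd hH']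
  calc |ε * (H b - laplaceWeight F b ε a * H a) - ε * (∫ s in a..b, laplaceWeight F b ε s * H' s)
        - ε * H b|
      = |ε * (laplaceWeight F b ε a * H a) + ε * ∫ s in a..b, laplaceWeight F b ε s * H' s| := by
        rw [← abs_neg]; ring_nf
    _ ≤ ε * (laplaceWeight F b ε a * |H a|) + ε * |∫ s in a..b, laplaceWeight F b ε s * H' s| := by
        refine (abs_add_le _ _).trans_eq ?_
        rw [abs_mul, abs_mul, abs_mul, abs_of_pos hε, abs_of_pos (laplaceWeight_pos a)]
    _ ≤ ε * (laplaceWeight F b ε a * |H a|) + ε * (L * (ε / m)) := by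
        gcongr
        exact abs_integral_laplaceWeight_mul_le hab hε hF hm hmF hH'L

theorem exists_abs_integral_laplaceWeight_mul_sub_le_sq {G : ℝ → ℝ} (hab : a < b)
    (hF : ContDiffOn ℝ 1 F (Icc a b)) (hG : ContDiffOn ℝ 1 G (Icc a b))
    (hFpos : ∀ s ∈ Icc a b, 0 < F s) :
    ∃ K ≥ 0, ∀ ε > 0, ε ≤ 1 →
      |(∫ s in a..b, laplaceWeight F b ε s * G s) - ε * G b / F b| ≤ K * ε ^ 2 := by
  have hFc := hF.continuousOn
  obtain ⟨s₀, hs₀, hmin⟩ := isCompact_Icc.exists_isMinOn (nonempty_Icc.2 hab.le) hFc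
  have hm := hFpos s₀ hs₀
  set H : ℝ → ℝ := fun s => G s / F s
  have hH : ContDiffOn ℝ 1 H (Icc a b) := hG.div hF fun s hs => (hFpos s hs).ne'
  have hH'c : ContinuousOn (derivWithin H (Icc a b)) (Icc a b) :=
    hH.continuousOn_derivWithin (uniqueDiffOn_Icc hab) le_rfl
  have hHd : ∀ s ∈ Ioo a b, HasDerivAt H (derivWithin H (Icc a b) s) s := fun s hs =>
    ((hH.differentiableOn one_ne_zero) s (Ioo_subset_Icc_self hs)).hasDerivWithinAt.hasDerivAt
      (Icc_mem_nhds hs.1 hs.2)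
  obtain ⟨L, hL⟩ := isCompact_Icc.exists_bound_of_continuousOn hH'c
  have hL0 : 0 ≤ L := (norm_nonneg _).trans (hL a ⟨le_rfl, hab.le⟩)
  set c := ∫ v in a..b, F v
  have hc : 0 < c := intervalIntegral.intervalIntegral_pos_of_pos_on
    (hFc.intervalIntegrable_of_Icc hab.le) (fun s hs => hFpos s (Ioo_subset_Icc_self hs)) hab
  refine ⟨|H a| * (2 / c ^ 2) + L / F s₀, by positivity, fun ε hε hε1 => ?_⟩
  have hG_eq : ∫ s in a..b, laplaceWeight F b ε s * G s =
      ∫ s in a..b, laplaceWeight F b ε s * (F s * H s) :=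
    intervalIntegral.integral_congr fun s hs => by
      rw [uIcc_of_le hab.le] at hs
      simp only [H]; rw [mul_div_cancel₀ _ (hFpos s hs).ne']
  have hlayer := abs_integral_laplaceWeight_mul_mul_sub_le hab.le hε hFc hm (fun s hs => hmin hs)
    hH.continuousOn hHd (hH'c.intervalIntegrable_of_Icc hab.le)
    fun s hs => (Real.norm_eq_abs _) ▸ hL s hs
  rw [hG_eq, mul_div_assoc]
  refine hlayer.trans ?_
  have hua : laplaceWeight F b ε a ≤ 2 / c ^ 2 * ε ^ 2 := laplaceWeight_le_sq hε hc
  have hua0 := (laplaceWeight_pos (F := F) (b := b) (ε := ε) a).le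
  have hfar : ε * (laplaceWeight F b ε a * |H a|) ≤ |H a| * (2 / c ^ 2) * ε ^ 2 :=
    calc ε * (laplaceWeight F b ε a * |H a|) ≤ 1 * (2 / c ^ 2 * ε ^ 2 * |H a|) := by gcongr
      _ = |H a| * (2 / c ^ 2) * ε ^ 2 := by ring
  have hnear : ε * (L * (ε / F s₀)) = L / F s₀ * ε ^ 2 := by field_simp
  linarith

end LaplaceWeight

theorem laplace_asymptotics_general (T : ℝ) (F G : ℝ → ℝ)
    (hF : ContDiffOn ℝ 1 F (Icc 0 T)) (hG : ContDiffOn ℝ 1 G (Icc 0 T))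
    (hFpos : ∀ s ∈ Ioc (0:ℝ) T, 0 < F s)
    (t : ℝ) (ht : t ∈ Ioc (0:ℝ) T) :
    ∃ C > (0:ℝ), ∃ ε0 > (0:ℝ), ∀ ε : ℝ, 0 < ε → ε ≤ ε0 →
      |(∫ s in (0:ℝ)..t, Real.exp (-(1/ε) * ∫ v in s..t, F v) * G s)
        - ε * G t / F t| ≤ C * ε ^ 2 := by
  obtain ⟨ht0, htT⟩ := ht
  have hfar : Icc 0 t ⊆ Icc 0 T := Icc_subset_Icc_right htT
  have hnear : Icc (t / 2) t ⊆ Icc 0 T := Icc_subset_Icc (by positivity) htT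
  obtain ⟨K₁, hK₁, hfar_le⟩ := exists_abs_integral_laplaceWeight_mul_le_sq (half_pos ht0).le
    (half_lt_self ht0) (hF.continuousOn.mono hfar) (fun s hs => hFpos s ⟨hs.1, hs.2.trans htT⟩)
    (hG.continuousOn.mono (Icc_subset_Icc_right ((half_le_self ht0.le).trans htT)))
  obtain ⟨K₂, hK₂, hnear_le⟩ := exists_abs_integral_laplaceWeight_mul_sub_le_sq (half_lt_self ht0)
    (hF.mono hnear) (hG.mono hnear)
    (fun s hs => hFpos s ⟨(half_pos ht0).trans_le hs.1, hs.2.trans htT⟩)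
  refine ⟨K₁ + K₂ + 1, by positivity, 1, one_pos, fun ε hε hε1 => ?_⟩
  have hu := continuousOn_laplaceWeight (ε := ε) ht0.le (hF.continuousOn.mono hfar)
  have hint : ∀ x ∈ Icc 0 t, ∀ y ∈ Icc 0 t,
      IntervalIntegrable (fun s => laplaceWeight F t ε s * G s) volume x y := fun x hx y hy =>
    ((hu.mul (hG.continuousOn.mono hfar)).mono (uIcc_subset_Icc hx hy)).intervalIntegrable
  change |(∫ s in (0:ℝ)..t, laplaceWeight F t ε s * G s) - _| ≤ _
  rw [← intervalIntegral.integral_add_adjacent_intervals (b := t / 2)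
    (hint 0 ⟨le_rfl, ht0.le⟩ (t / 2) ⟨(half_pos ht0).le, half_le_self ht0.le⟩)
    (hint (t / 2) ⟨(half_pos ht0).le, half_le_self ht0.le⟩ t ⟨ht0.le, le_rfl⟩), add_sub_assoc]
  calc _ ≤ K₁ * ε ^ 2 + K₂ * ε ^ 2 :=
        (abs_add_le _ _).trans (add_le_add (hfar_le ε hε) (hnear_le ε hε hε1))
    _ ≤ (K₁ + K₂ + 1) * ε ^ 2 := by nlinarith

/-- Laplace-type asymptotics: `N_ε(t) = ε G(t)/F(t) (1 + O(ε))` as `ε → 0⁺`. -/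
theorem laplace_asymptotics (T : ℝ) (hT : 0 < T) (F G : ℝ → ℝ)
    (hF : ContDiffOn ℝ 1 F (Icc 0 T)) (hG : ContDiffOn ℝ 1 G (Icc 0 T))
    (hF0 : F 0 = 0) (hFpos : ∀ s ∈ Ioc (0:ℝ) T, 0 < F s)
    (t : ℝ) (ht : t ∈ Ioc (0:ℝ) T) :
    ∃ C > (0:ℝ), ∃ ε0 > (0:ℝ), ∀ ε : ℝ, 0 < ε → ε ≤ ε0 →
      |(∫ s in (0:ℝ)..t, Real.exp (-(1/ε) * ∫ v in s..t, F v) * G s)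
        - ε * G t / F t| ≤ C * ε ^ 2 :=
  laplace_asymptotics_general T F G hF hG hFpos t ht
end

section
/- Let $\gamma^*$ be the solution of $\frac{d\gamma^*}{dt} = -2a\gamma^* - \frac{(\gamma^*)^2\kappa^2}{\varepsilon^2} + b^2$, $\gamma^*(0)=0$. Then for any $t_0\in(0,T]$, $\sup_{t_0\le t\le T}\left|\gamma^*(t) - \frac{b\varepsilon}{\kappa}\right| = O(\varepsilon^2)$ as $\varepsilon\to 0^+$. -/
set_option maxHeartbeats 1000000

open Real Set

/-- The solution of the Riccati equation satisfies
`sup_{t0 ≤ t ≤ T} |γ*(t) - bε/κ| = O(ε²)` as `ε → 0⁺`. -/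
theorem riccati_solution_asymptotics (a b κ T t0 : ℝ)
    (ha : 0 < a) (hb : 0 < b) (hκ : 0 < κ) (hT : 0 < T) (ht0 : t0 ∈ Ioc (0:ℝ) T)
    (γ : ℝ → ℝ → ℝ)
    (hsol : ∀ ε > (0:ℝ), γ ε 0 = 0 ∧
      ∀ t ∈ Icc (0:ℝ) T,
        HasDerivAt (γ ε) (-2 * a * γ ε t - (γ ε t) ^ 2 * κ ^ 2 / ε ^ 2 + b ^ 2) t) :
    ∃ C > (0:ℝ), ∃ ε0 > (0:ℝ), ∀ ε : ℝ, 0 < ε → ε ≤ ε0 →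
      ∀ t ∈ Icc t0 T, |γ ε t - b * ε / κ| ≤ C * ε ^ 2 := by
  obtain ⟨ht0pos, ht0T⟩ := ht0
  refine ⟨a / κ ^ 2 + 1 / (κ ^ 2 * t0), by positivity, 1, one_pos, ?_⟩
  intro ε hε _ t ht
  obtain ⟨h0, hd⟩ := hsol ε hε
  have htT : t ∈ Icc (0:ℝ) T := ⟨ht0pos.le.trans ht.1, ht.2⟩
  obtain ⟨r, hr_def⟩ : ∃ r : ℝ, r = Real.sqrt (a ^ 2 + b ^ 2 * κ ^ 2 / ε ^ 2) := ⟨_, rfl⟩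
  have hr2 : r ^ 2 = a ^ 2 + b ^ 2 * κ ^ 2 / ε ^ 2 := by
    rw [hr_def]; exact Real.sq_sqrt (by positivity)
  have hr0 : 0 < r := by rw [hr_def]; exact Real.sqrt_pos.mpr (by positivity)
  have hbk : (b * κ / ε) ^ 2 = b ^ 2 * κ ^ 2 / ε ^ 2 := by rw [div_pow, mul_pow]
  have hrlb : b * κ / ε ≤ r := by
    rw [hr_def, show b * κ / ε = Real.sqrt ((b * κ / ε) ^ 2) from
      (Real.sqrt_sq (by positivity)).symm]
    apply Real.sqrt_le_sqrt
    rw [hbk]; linarith [sq_nonneg a]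
  have hrub : r ≤ a + b * κ / ε := by
    rw [hr_def, show a + b * κ / ε = Real.sqrt ((a + b * κ / ε) ^ 2) from
      (Real.sqrt_sq (by positivity)).symm]
    apply Real.sqrt_le_sqrt
    have hexp : (a + b * κ / ε) ^ 2 = a ^ 2 + 2 * a * (b * κ / ε) + (b * κ / ε) ^ 2 := by ring
    have hp : (0:ℝ) < 2 * a * (b * κ / ε) := by positivity
    linarith [hexp, hbk, hp]
  have hra : a ≤ r := by
    have h := Real.sqrt_le_sqrt (show a ^ 2 ≤ a ^ 2 + b ^ 2 * κ ^ 2 / ε ^ 2 by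
      linarith [(by positivity : (0:ℝ) ≤ b ^ 2 * κ ^ 2 / ε ^ 2)])
    rw [Real.sqrt_sq ha.le] at h
    rw [hr_def]; exact h
  obtain ⟨g, hg_def⟩ : ∃ g : ℝ, g = ε ^ 2 / κ ^ 2 * (r - a) := ⟨_, rfl⟩
  have hgnn : 0 ≤ g := by rw [hg_def]; exact mul_nonneg (by positivity) (by linarith)
  have hgub : g ≤ b * ε / κ := by
    have h1 : r - a ≤ b * κ / ε := by linarith
    have h2 : ε ^ 2 / κ ^ 2 * (r - a) ≤ ε ^ 2 / κ ^ 2 * (b * κ / ε) :=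
      mul_le_mul_of_nonneg_left h1 (by positivity)
    have h3 : ε ^ 2 / κ ^ 2 * (b * κ / ε) = b * ε / κ := by field_simp
    rw [hg_def]; linarith
  have hglb : b * ε / κ - g ≤ a * ε ^ 2 / κ ^ 2 := by
    have h1 : b * κ / ε - a ≤ r - a := by linarith
    have h2 : ε ^ 2 / κ ^ 2 * (b * κ / ε - a) ≤ ε ^ 2 / κ ^ 2 * (r - a) :=
      mul_le_mul_of_nonneg_left h1 (by positivity)
    have h3 : ε ^ 2 / κ ^ 2 * (b * κ / ε - a) = b * ε / κ - a * ε ^ 2 / κ ^ 2 := by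
      field_simp
    rw [hg_def]; linarith
  -- equilibrium equation
  have h1g : g * κ ^ 2 / ε ^ 2 = r - a := by rw [hg_def]; field_simp
  have h2g : (r - a) * (r + a) = b ^ 2 * κ ^ 2 / ε ^ 2 := by linear_combination hr2
  have hg2 : g * (r + a) = b ^ 2 := by
    calc g * (r + a) = ε ^ 2 / κ ^ 2 * ((r - a) * (r + a)) := by rw [hg_def]; ring
      _ = ε ^ 2 / κ ^ 2 * (b ^ 2 * κ ^ 2 / ε ^ 2) := by rw [h2g]
      _ = b ^ 2 := by field_simp
  have h3g : g ^ 2 * κ ^ 2 / ε ^ 2 = g * (r - a) := by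
    calc g ^ 2 * κ ^ 2 / ε ^ 2 = g * (g * κ ^ 2 / ε ^ 2) := by ring
      _ = g * (r - a) := by rw [h1g]
  have heqm : -2 * a * g - g ^ 2 * κ ^ 2 / ε ^ 2 + b ^ 2 = 0 := by
    linear_combination -h3g - hg2
  have hcont : ContinuousOn (γ ε) (Icc 0 T) := fun x hx =>
    (hd x hx).continuousAt.continuousWithinAt
  -- upper bound: γ ≤ g on [0,T]
  have hub : ∀ x ∈ Icc (0:ℝ) T, γ ε x ≤ g := by
    intro x hx
    have key : ∀ δ > (0:ℝ), γ ε x ≤ g + δ := by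
      intro δ hδ
      refine image_le_of_deriv_right_lt_deriv_boundary (f := γ ε)
        (f' := fun y => -2 * a * γ ε y - (γ ε y) ^ 2 * κ ^ 2 / ε ^ 2 + b ^ 2)
        (B := fun _ => g + δ) (B' := fun _ => 0) hcont
        (fun y hy => (hd y (Ico_subset_Icc_self hy)).hasDerivWithinAt)
        (by rw [h0]; positivity) (fun y => hasDerivAt_const y _) ?_ hx
      intro y _ hyB
      have hyB' : γ ε y = g + δ := hyB
      show -2 * a * γ ε y - γ ε y ^ 2 * κ ^ 2 / ε ^ 2 + b ^ 2 < 0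
      rw [hyB']
      have key2 : -2 * a * (g + δ) - (g + δ) ^ 2 * κ ^ 2 / ε ^ 2 + b ^ 2
          = (-2 * a * g - g ^ 2 * κ ^ 2 / ε ^ 2 + b ^ 2)
            - 2 * a * δ - (2 * g * δ + δ ^ 2) * κ ^ 2 / ε ^ 2 := by ring
      rw [key2, heqm]
      have h5 : (0:ℝ) ≤ 2 * g * δ + δ ^ 2 := by nlinarith
      have h6 : (0:ℝ) ≤ (2 * g * δ + δ ^ 2) * κ ^ 2 / ε ^ 2 :=
        div_nonneg (mul_nonneg h5 (sq_nonneg κ)) (sq_nonneg ε)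
      have h7 : (0:ℝ) < 2 * a * δ := by positivity
      linarith
    by_contra hcon
    push_neg at hcon
    have := key ((γ ε x - g) / 2) (by linarith)
    linarith
  -- lower bound: γ ≥ 0 on [0,T]
  have hlb : ∀ x ∈ Icc (0:ℝ) T, 0 ≤ γ ε x := by
    intro x hx
    have key : ∀ δ, 0 < δ → δ < b * ε / κ → -γ ε x ≤ δ := by
      intro δ hδ hδ2
      refine image_le_of_deriv_right_lt_deriv_boundary (f := fun s => -γ ε s)
        (f' := fun y => -(-2 * a * γ ε y - (γ ε y) ^ 2 * κ ^ 2 / ε ^ 2 + b ^ 2))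
        (B := fun _ => δ) (B' := fun _ => 0) hcont.neg
        (fun y hy => (hd y (Ico_subset_Icc_self hy)).hasDerivWithinAt.neg)
        (by show -γ ε 0 ≤ δ; rw [h0]; simpa using hδ.le)
        (fun y => hasDerivAt_const y _) ?_ hx
      intro y _ hyB
      have hyB' : -γ ε y = δ := hyB
      have hγy : γ ε y = -δ := by linarith
      show -(-2 * a * γ ε y - γ ε y ^ 2 * κ ^ 2 / ε ^ 2 + b ^ 2) < 0
      rw [hγy]
      have key2 : -(-2 * a * (-δ) - (-δ) ^ 2 * κ ^ 2 / ε ^ 2 + b ^ 2)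
          = -(2 * a * δ) + δ ^ 2 * κ ^ 2 / ε ^ 2 - b ^ 2 := by ring
      rw [key2]
      have h6 : δ * κ < b * ε := by
        have := (lt_div_iff₀ hκ).mp hδ2; linarith
      have h7 : δ ^ 2 * κ ^ 2 / ε ^ 2 < b ^ 2 := by
        rw [div_lt_iff₀ (by positivity)]
        nlinarith [mul_pos (sub_pos.mpr h6) (by positivity : (0:ℝ) < b * ε + δ * κ)]
      have h8 : (0:ℝ) < 2 * a * δ := by positivity
      linarith
    by_contra hcon
    push_neg at hcon
    obtain ⟨δ, hδ_def⟩ : ∃ δ : ℝ, δ = min (-γ ε x) (b * ε / κ) / 2 := ⟨_, rfl⟩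
    have h1 : 0 < -γ ε x := by linarith
    have hbek : (0:ℝ) < b * ε / κ := by positivity
    have h2 : 0 < δ := by
      rw [hδ_def]
      exact div_pos (lt_min h1 hbek) two_pos
    have h3 : δ < b * ε / κ := by
      have hle : δ ≤ (b * ε / κ) / 2 := by
        rw [hδ_def]; exact (div_le_div_iff_of_pos_right two_pos).mpr (min_le_right _ _)
      linarith
    have h4 : δ < -γ ε x := by
      have hle : δ ≤ (-γ ε x) / 2 := by
        rw [hδ_def]; exact (div_le_div_iff_of_pos_right two_pos).mpr (min_le_left _ _)
      linarith
    linarith [key δ h2 h3]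
  -- Gronwall argument
  obtain ⟨c, hc_def⟩ : ∃ c : ℝ, c = b * κ / ε := ⟨_, rfl⟩
  have hcpos : 0 < c := by rw [hc_def]; positivity
  obtain ⟨φ, hφ_def⟩ : ∃ φ : ℝ → ℝ, φ = fun s => (g - γ ε s) * Real.exp (c * s) := ⟨_, rfl⟩
  have hE : ∀ x : ℝ, HasDerivAt (fun s => Real.exp (c * s)) (Real.exp (c * x) * c) x := by
    intro x
    have := ((hasDerivAt_id x).const_mul c).exp
    simpa using this
  have hφd : ∀ x ∈ Icc (0:ℝ) T, HasDerivAt φ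
      (-(-2 * a * γ ε x - (γ ε x) ^ 2 * κ ^ 2 / ε ^ 2 + b ^ 2) * Real.exp (c * x)
        + (g - γ ε x) * (Real.exp (c * x) * c)) x := by
    intro x hx
    rw [hφ_def]
    exact ((hd x hx).const_sub g).mul (hE x)
  have hmono : AntitoneOn φ (Icc 0 T) := by
    apply antitoneOn_of_deriv_nonpos (convex_Icc 0 T)
    · exact fun x hx => ((hφd x hx).continuousAt).continuousWithinAt
    · intro x hx
      rw [interior_Icc] at hx
      exact (hφd x (Ioo_subset_Icc_self hx)).differentiableAt.differentiableWithinAt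
    · intro x hx
      rw [interior_Icc] at hx
      have hxI : x ∈ Icc (0:ℝ) T := Ioo_subset_Icc_self hx
      rw [(hφd x hxI).deriv]
      have hγub := hub x hxI
      have hγlb := hlb x hxI
      have hfact : -(-2 * a * γ ε x - (γ ε x) ^ 2 * κ ^ 2 / ε ^ 2 + b ^ 2)
          + (g - γ ε x) * c
          = (g - γ ε x) * (c - 2 * a - (γ ε x + g) * κ ^ 2 / ε ^ 2) := by
        linear_combination -heqm
      have hbr : c - 2 * a - (γ ε x + g) * κ ^ 2 / ε ^ 2 ≤ 0 := by
        have h2 : g * κ ^ 2 / ε ^ 2 ≤ (γ ε x + g) * κ ^ 2 / ε ^ 2 := by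
          gcongr
          linarith
        rw [h1g] at h2
        have : c ≤ r := by rw [hc_def]; exact hrlb
        linarith
      have hepos : 0 < Real.exp (c * x) := Real.exp_pos _
      have hcollect : -(-2 * a * γ ε x - (γ ε x) ^ 2 * κ ^ 2 / ε ^ 2 + b ^ 2) * Real.exp (c * x)
          + (g - γ ε x) * (Real.exp (c * x) * c)
          = ((-(-2 * a * γ ε x - (γ ε x) ^ 2 * κ ^ 2 / ε ^ 2 + b ^ 2))
            + (g - γ ε x) * c) * Real.exp (c * x) := by ring
      rw [hcollect, hfact]
      exact mul_nonpos_of_nonpos_of_nonneg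
        (mul_nonpos_of_nonneg_of_nonpos (by linarith) hbr) hepos.le
  have hφ0 : φ 0 = g := by rw [hφ_def]; simp [h0]
  have hφt : φ t ≤ g := by
    have := hmono (left_mem_Icc.mpr hT.le) htT htT.1
    rw [hφ0] at this
    exact this
  have hexplb : c * t0 ≤ Real.exp (c * t) := by
    have h1 : c * t0 ≤ c * t := mul_le_mul_of_nonneg_left ht.1 hcpos.le
    linarith [Real.add_one_le_exp (c * t)]
  have hhub : g - γ ε t ≤ ε ^ 2 / (κ ^ 2 * t0) := by
    have hh0 : 0 ≤ g - γ ε t := by linarith [hub t htT]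
    have hctpos : (0:ℝ) < c * t0 := by positivity
    have hφt' : (g - γ ε t) * Real.exp (c * t) ≤ g := by
      rw [hφ_def] at hφt; simpa using hφt
    have h1 : (g - γ ε t) * (c * t0) ≤ g :=
      (mul_le_mul_of_nonneg_left hexplb hh0).trans hφt'
    have h2 : g - γ ε t ≤ g / (c * t0) := by
      rw [le_div_iff₀ hctpos]; exact h1
    have h3 : g / (c * t0) ≤ (b * ε / κ) / (c * t0) := by gcongr
    have h4 : (b * ε / κ) / (c * t0) = ε ^ 2 / (κ ^ 2 * t0) := by
      rw [hc_def]; field_simp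
    rw [h4] at h3
    linarith
  -- conclude
  have hγub := hub t htT
  have hh0 : 0 ≤ g - γ ε t := by linarith
  rw [abs_le]
  have e1 : a * ε ^ 2 / κ ^ 2 = (a / κ ^ 2) * ε ^ 2 := by ring
  have e2 : ε ^ 2 / (κ ^ 2 * t0) = (1 / (κ ^ 2 * t0)) * ε ^ 2 := by ring
  rw [e1] at hglb
  rw [e2] at hhub
  have hdist : (a / κ ^ 2 + 1 / (κ ^ 2 * t0)) * ε ^ 2
      = (a / κ ^ 2) * ε ^ 2 + (1 / (κ ^ 2 * t0)) * ε ^ 2 := by ring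
  have hC : (0:ℝ) ≤ (a / κ ^ 2 + 1 / (κ ^ 2 * t0)) * ε ^ 2 := by positivity
  constructor
  · linarith
  · linarith
end
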